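/- arXiv:0804.4301 — 7 statements merged into one kernel-verified Lean document; each statement's English description precedes it below -/
import Mathlib

section
/- For all nonzero vectors a, b in R^3, |a| + |b| - |a+b| is comparable (up to absolute constants) to min(|a|,|b|)·θ(a,b)^2, where θ(a,b) is the angle between a and b. -/
/-!
With `D = ‖x‖ + ‖y‖ - ‖x + y‖` and `S = ‖x‖ + ‖y‖ + ‖x + y‖`, the law of cosines gives
`D * S = 2 ‖x‖ ‖y‖ (1 - cos θ)`. Since `2 max ≤ S ≤ 4 max` and `‖x‖ ‖y‖ = min * max`, the
defect `D` is `min ‖x‖ ‖y‖ * (1 - cos θ)` up to a factor 2, and `1 - cos θ` is comparable to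
`θ²` on `[0, π]`.
-/

open InnerProductGeometry Real

lemma Real.sq_div_five_le_one_sub_cos {x : ℝ} (hx : |x| ≤ π) : x ^ 2 / 5 ≤ 1 - cos x := by
  have hπ : π ^ 2 ≤ 10 := by nlinarith [pi_lt_d2, pi_pos]
  have : 2 / 10 ≤ 2 / π ^ 2 := by gcongr
  nlinarith [cos_le_one_sub_mul_cos_sq hx, sq_nonneg x]

lemma two_mul_max_le_norm_add_norm_add_norm_add {E : Type*} [SeminormedAddCommGroup E]
    (x y : E) :
    2 * max ‖x‖ ‖y‖ ≤ ‖x‖ + ‖y‖ + ‖x + y‖ := by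
  have hx : ‖x‖ ≤ ‖x + y‖ + ‖y‖ := by simpa using norm_sub_le (x + y) y
  have hy : ‖y‖ ≤ ‖x + y‖ + ‖x‖ := by simpa using norm_sub_le (x + y) x
  rcases max_choice ‖x‖ ‖y‖ with h | h <;> rw [h] <;> linarith

lemma norm_add_norm_add_norm_add_le_four_mul_max {E : Type*} [SeminormedAddCommGroup E]
    (x y : E) :
    ‖x‖ + ‖y‖ + ‖x + y‖ ≤ 4 * max ‖x‖ ‖y‖ := by
  linarith [norm_add_le x y, le_max_left ‖x‖ ‖y‖, le_max_right ‖x‖ ‖y‖]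

namespace InnerProductGeometry

variable {E : Type*} [NormedAddCommGroup E] [InnerProductSpace ℝ E] (x y : E)

lemma norm_add_norm_sub_norm_add_mul_add :
    (‖x‖ + ‖y‖ - ‖x + y‖) * (‖x‖ + ‖y‖ + ‖x + y‖) =
      2 * (min ‖x‖ ‖y‖ * max ‖x‖ ‖y‖) * (1 - cos (angle x y)) := by
  have h := norm_add_sq_real x y
  rw [← cos_angle_mul_norm_mul_norm] at h
  rw [min_mul_max]
  linear_combination -h

lemma min_mul_one_sub_cos_angle_div_two_le :
    min ‖x‖ ‖y‖ * (1 - cos (angle x y)) / 2 ≤ ‖x‖ + ‖y‖ - ‖x + y‖ := by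
  have hD : 0 ≤ ‖x‖ + ‖y‖ - ‖x + y‖ := by linarith [norm_add_le x y]
  have hm : 0 ≤ min ‖x‖ ‖y‖ := le_min (norm_nonneg x) (norm_nonneg y)
  rcases (le_max_of_le_left (norm_nonneg x) : 0 ≤ max ‖x‖ ‖y‖).eq_or_lt with hM | hM
  · have : min ‖x‖ ‖y‖ = 0 := le_antisymm (hM ▸ min_le_max) hm
    simpa [this] using hD
  · refine le_of_mul_le_mul_right ?_ (by positivity : 0 < 4 * max ‖x‖ ‖y‖)
    calc min ‖x‖ ‖y‖ * (1 - cos (angle x y)) / 2 * (4 * max ‖x‖ ‖y‖)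
        = (‖x‖ + ‖y‖ - ‖x + y‖) * (‖x‖ + ‖y‖ + ‖x + y‖) := by
          rw [norm_add_norm_sub_norm_add_mul_add]; ring
      _ ≤ (‖x‖ + ‖y‖ - ‖x + y‖) * (4 * max ‖x‖ ‖y‖) :=
          mul_le_mul_of_nonneg_left (norm_add_norm_add_norm_add_le_four_mul_max x y) hD

lemma norm_add_norm_sub_norm_add_le_min_mul_one_sub_cos_angle :
    ‖x‖ + ‖y‖ - ‖x + y‖ ≤ min ‖x‖ ‖y‖ * (1 - cos (angle x y)) := by
  have hD : 0 ≤ ‖x‖ + ‖y‖ - ‖x + y‖ := by linarith [norm_add_le x y]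
  rcases (le_max_of_le_left (norm_nonneg x) : 0 ≤ max ‖x‖ ‖y‖).eq_or_lt with hM | hM
  · have hx : ‖x‖ = 0 := le_antisymm (hM ▸ le_max_left _ _) (norm_nonneg x)
    have hy : ‖y‖ = 0 := le_antisymm (hM ▸ le_max_right _ _) (norm_nonneg y)
    rw [hx, hy, min_self, zero_mul]
    linarith [norm_nonneg (x + y)]
  · refine le_of_mul_le_mul_right ?_ (by positivity : 0 < 2 * max ‖x‖ ‖y‖)
    calc (‖x‖ + ‖y‖ - ‖x + y‖) * (2 * max ‖x‖ ‖y‖)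
        ≤ (‖x‖ + ‖y‖ - ‖x + y‖) * (‖x‖ + ‖y‖ + ‖x + y‖) :=
          mul_le_mul_of_nonneg_left (two_mul_max_le_norm_add_norm_add_norm_add x y) hD
      _ = min ‖x‖ ‖y‖ * (1 - cos (angle x y)) * (2 * max ‖x‖ ‖y‖) := by
          rw [norm_add_norm_sub_norm_add_mul_add]; ring

end InnerProductGeometry

/-- For all nonzero vectors `a, b` in `ℝ³`, the quantity `|a| + |b| - |a+b|` is comparable,
up to absolute constants, to `min(|a|,|b|) · θ(a,b)²`, where `θ(a,b)` is the angle
between `a` and `b`. -/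
theorem abs_add_sub_comparable_min_angle_sq :
    ∃ c C : ℝ, 0 < c ∧ 0 < C ∧
      ∀ a b : EuclideanSpace ℝ (Fin 3), a ≠ 0 → b ≠ 0 →
        c * (min ‖a‖ ‖b‖ * angle a b ^ 2) ≤ ‖a‖ + ‖b‖ - ‖a + b‖ ∧
        ‖a‖ + ‖b‖ - ‖a + b‖ ≤ C * (min ‖a‖ ‖b‖ * angle a b ^ 2) := by
  refine ⟨1 / 10, 1 / 2, by norm_num, by norm_num, fun a b _ _ => ⟨?_, ?_⟩⟩
  · have hθ : |angle a b| ≤ π := by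
      rw [abs_of_nonneg (angle_nonneg a b)]; exact angle_le_pi a b
    calc 1 / 10 * (min ‖a‖ ‖b‖ * angle a b ^ 2)
        = min ‖a‖ ‖b‖ * (angle a b ^ 2 / 5) / 2 := by ring
      _ ≤ min ‖a‖ ‖b‖ * (1 - cos (angle a b)) / 2 := by
          gcongr; exact Real.sq_div_five_le_one_sub_cos hθ
      _ ≤ ‖a‖ + ‖b‖ - ‖a + b‖ := min_mul_one_sub_cos_angle_div_two_le a b
  · calc ‖a‖ + ‖b‖ - ‖a + b‖
        ≤ min ‖a‖ ‖b‖ * (1 - cos (angle a b)) :=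
          norm_add_norm_sub_norm_add_le_min_mul_one_sub_cos_angle a b
      _ ≤ min ‖a‖ ‖b‖ * (angle a b ^ 2 / 2) := by
          gcongr; linarith [one_sub_sq_div_two_le_cos (x := angle a b)]
      _ = 1 / 2 * (min ‖a‖ ‖b‖ * angle a b ^ 2) := by ring
end

section
/- For all nonzero vectors a, b in R^3 with a ≠ b, the quantity |a−b| − ||a|−|b|| is comparable (up to absolute constants) to (|a||b|/|a−b|)·θ(a,b)^2. -/
/-! With `s = ‖a - b‖` and `d = |‖a‖ - ‖b‖|`, the law of cosines gives
`(s - d) (s + d) = s² - d² = 2 ‖a‖ ‖b‖ (1 - cos θ)`. Since `0 ≤ d ≤ s`, the factor `s + d`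
lies between `s` and `2 s`, and on `[0, π]` the quantity `1 - cos θ` is comparable to `θ²`
(`2 θ² / π² ≤ 1 - cos θ ≤ θ² / 2`). -/

open Real InnerProductGeometry

lemma sq_sub_sq_div_two_mul_le_sub {s d : ℝ} (hs : 0 < s) : (s ^ 2 - d ^ 2) / (2 * s) ≤ s - d := by
  rw [div_le_iff₀ (by positivity)]
  nlinarith [sq_nonneg (s - d)]

lemma sub_le_sq_sub_sq_div {s d : ℝ} (hd : 0 ≤ d) (hds : d ≤ s) : s - d ≤ (s ^ 2 - d ^ 2) / s := by
  rcases hd.trans hds |>.eq_or_lt with hs | hs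
  · subst hs
    simp [le_antisymm hds hd]
  · rw [le_div_iff₀ hs]
    nlinarith [mul_nonneg hd (sub_nonneg.2 hds)]

namespace InnerProductGeometry

variable {V : Type*} [NormedAddCommGroup V] [InnerProductSpace ℝ V]

theorem norm_sub_sq_sub_sq_abs_norm_sub_norm (a b : V) :
    ‖a - b‖ ^ 2 - |‖a‖ - ‖b‖| ^ 2 = 2 * (‖a‖ * ‖b‖) * (1 - cos (angle a b)) := by
  rw [norm_sub_sq_real, sq_abs, ← cos_angle_mul_norm_mul_norm]
  ring

theorem norm_mul_norm_mul_one_sub_cos_angle_div_le {a b : V} (hab : a ≠ b) :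
    ‖a‖ * ‖b‖ * (1 - cos (angle a b)) / ‖a - b‖ ≤ ‖a - b‖ - |‖a‖ - ‖b‖| := by
  have hs : 0 < ‖a - b‖ := norm_pos_iff.2 (sub_ne_zero.2 hab)
  calc ‖a‖ * ‖b‖ * (1 - cos (angle a b)) / ‖a - b‖
      = (‖a - b‖ ^ 2 - |‖a‖ - ‖b‖| ^ 2) / (2 * ‖a - b‖) := by
        rw [norm_sub_sq_sub_sq_abs_norm_sub_norm]
        field_simp
    _ ≤ ‖a - b‖ - |‖a‖ - ‖b‖| := sq_sub_sq_div_two_mul_le_sub hs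

theorem norm_sub_sub_abs_norm_sub_norm_le (a b : V) :
    ‖a - b‖ - |‖a‖ - ‖b‖| ≤ 2 * (‖a‖ * ‖b‖) * (1 - cos (angle a b)) / ‖a - b‖ := by
  rw [← norm_sub_sq_sub_sq_abs_norm_sub_norm]
  exact sub_le_sq_sub_sq_div (abs_nonneg _) (abs_norm_sub_norm_le a b)

end InnerProductGeometry

/-- For all nonzero vectors `a, b` in `ℝ³` with `a ≠ b`, the quantity
`|a−b| − ||a|−|b||` is comparable, up to absolute constants, to
`(|a||b|/|a−b|) · θ(a,b)²`, where `θ(a,b)` is the angle between `a` and `b`. -/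
theorem abs_sub_sub_comparable_angle_sq :
    ∃ c C : ℝ, 0 < c ∧ 0 < C ∧
      ∀ a b : EuclideanSpace ℝ (Fin 3), a ≠ 0 → b ≠ 0 → a ≠ b →
        c * (‖a‖ * ‖b‖ / ‖a - b‖ * angle a b ^ 2) ≤ ‖a - b‖ - |‖a‖ - ‖b‖| ∧
        ‖a - b‖ - |‖a‖ - ‖b‖| ≤ C * (‖a‖ * ‖b‖ / ‖a - b‖ * angle a b ^ 2) := by
  refine ⟨2 / π ^ 2, 1, by positivity, one_pos, fun a b _ _ hab => ⟨?_, ?_⟩⟩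
  · calc 2 / π ^ 2 * (‖a‖ * ‖b‖ / ‖a - b‖ * angle a b ^ 2)
        = ‖a‖ * ‖b‖ * (2 / π ^ 2 * angle a b ^ 2) / ‖a - b‖ := by ring
      _ ≤ ‖a‖ * ‖b‖ * (1 - cos (angle a b)) / ‖a - b‖ := by
        gcongr
        linarith [cos_le_one_sub_mul_cos_sq
          (abs_le.2 ⟨by linarith [angle_nonneg a b, pi_pos], angle_le_pi a b⟩)]
      _ ≤ ‖a - b‖ - |‖a‖ - ‖b‖| := norm_mul_norm_mul_one_sub_cos_angle_div_le hab
  · calc ‖a - b‖ - |‖a‖ - ‖b‖|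
        ≤ 2 * (‖a‖ * ‖b‖) * (1 - cos (angle a b)) / ‖a - b‖ :=
          norm_sub_sub_abs_norm_sub_norm_le a b
      _ ≤ 2 * (‖a‖ * ‖b‖) * (angle a b ^ 2 / 2) / ‖a - b‖ := by
        gcongr
        linarith [one_sub_sq_div_two_le_cos (x := angle a b)]
      _ = 1 * (‖a‖ * ‖b‖ / ‖a - b‖ * angle a b ^ 2) := by ring
end

section
/- There is an absolute constant C such that for all nonzero ξ₁, ξ₂ ∈ R^3 and all z ∈ C^4, |Π(ξ₁)Π(−ξ₂)z| ≤ C|z|·θ(ξ₁,ξ₂), where θ(ξ₁,ξ₂) is the angle between ξ₁ and ξ₂. -/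
noncomputable section

open InnerProductGeometry

abbrev E3 := EuclideanSpace ℝ (Fin 3)
abbrev C4 := EuclideanSpace ℂ (Fin 4)

/-- The 4×4 Dirac matrices `α¹, α², α³`, built from the Pauli matrices. -/
def diracAlpha : Fin 3 → Matrix (Fin 4) (Fin 4) ℂ
  | 0 => !![0,0,0,1; 0,0,1,0; 0,1,0,0; 1,0,0,0]
  | 1 => !![0,0,0,-Complex.I; 0,0,Complex.I,0; 0,-Complex.I,0,0; Complex.I,0,0,0]
  | 2 => !![0,0,1,0; 0,0,0,-1; 1,0,0,0; 0,-1,0,0]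

/-- The Dirac projection `Π(ξ) = (1/2)(I + ξ^j α_j / |ξ|)`. -/
def diracPi (ξ : E3) : Matrix (Fin 4) (Fin 4) ℂ :=
  (1/2 : ℂ) • ((1 : Matrix (Fin 4) (Fin 4) ℂ) +
    (‖ξ‖⁻¹ : ℝ) • ∑ j : Fin 3, (ξ j : ℂ) • diracAlpha j)

/-!
Since the `α_j` are Hermitian and satisfy the Clifford relations, `α·v` is Hermitian with
`(α·v)² = |v|²`, so its operator norm is `|v|`. With `ξ̂ = ξ/|ξ|` this gives `Π(ξ)Π(−ξ) = 0`,
hence `Π(ξ₁)Π(−ξ₂) = Π(ξ₁)(Π(−ξ₂) − Π(−ξ₁)) = ½ Π(ξ₁) α·(ξ̂₁ − ξ̂₂)`. As `‖Π(ξ₁)‖ ≤ 1` and the chord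
`|ξ̂₁ − ξ̂₂|` is at most the arc `θ(ξ₁, ξ₂)`, the bound holds with `C = 1/2`.
-/

open scoped Matrix.Norms.L2Operator

theorem sum_smul_mul_self_of_anticomm {ι A : Type*} [Fintype ι] [DecidableEq ι] [Ring A]
    [Algebra ℝ A] (a : ι → A) (ha : ∀ i j, a i * a j + a j * a i = if i = j then 2 else 0)
    (x : ι → ℝ) : (∑ i, x i • a i) * (∑ i, x i • a i) = (∑ i, x i ^ 2) • (1 : A) := by
  refine smul_right_injective A (two_ne_zero (α := ℝ)) ?_
  calc (2 : ℝ) • ((∑ i, x i • a i) * (∑ i, x i • a i))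
      = ∑ i, ∑ j, (x i * x j) • (a i * a j) + ∑ i, ∑ j, (x j * x i) • (a j * a i) := by
        rw [two_smul, Finset.sum_comm (f := fun i j => (x j * x i) • (a j * a i))]
        simp only [Finset.sum_mul_sum, smul_mul_smul_comm]
    _ = ∑ i, ∑ j, (x i * x j) • (a i * a j + a j * a i) := by
        simp only [← Finset.sum_add_distrib, mul_comm (x _) (x _), smul_add]
    _ = (2 : ℝ) • ((∑ i, x i ^ 2) • (1 : A)) := by
        simp only [ha, smul_ite, smul_zero, Finset.sum_ite_eq, Finset.mem_univ, if_true,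
          Finset.sum_smul, Finset.smul_sum]
        refine Finset.sum_congr rfl fun i _ => ?_
        rw [smul_comm, ← sq, ofNat_smul_eq_nsmul ℝ 2, nsmul_eq_mul, Nat.cast_ofNat, mul_one]

theorem norm_inv_norm_smul_sub_le_angle {V : Type*} [NormedAddCommGroup V]
    [InnerProductSpace ℝ V] {x y : V} (hx : x ≠ 0) (hy : y ≠ 0) :
    ‖‖x‖⁻¹ • x - ‖y‖⁻¹ • y‖ ≤ angle x y := by
  set u := ‖x‖⁻¹ • x
  set v := ‖y‖⁻¹ • y
  have hu : ‖u‖ = 1 := by simpa using norm_smul_inv_norm (𝕜 := ℝ) hx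
  have hv : ‖v‖ = 1 := by simpa using norm_smul_inv_norm (𝕜 := ℝ) hy
  have huv : angle u v = angle x y := by
    rw [angle_smul_left_of_pos _ _ (by positivity), angle_smul_right_of_pos _ _ (by positivity)]
  have h := norm_sub_sq_eq_norm_sq_add_norm_sq_sub_two_mul_norm_mul_norm_mul_cos_angle u v
  rw [hu, hv, huv] at h
  -- `‖u - v‖² = 2 - 2 cos θ ≤ θ²`
  nlinarith [Real.one_sub_sq_div_two_le_cos (x := angle x y), angle_nonneg x y, norm_nonneg (u - v)]

theorem diracAlpha_isHermitian (j : Fin 3) : (diracAlpha j).IsHermitian := by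
  fin_cases j <;> simp [Matrix.IsHermitian, diracAlpha, Matrix.conjTranspose, ← Matrix.ext_iff,
    Fin.forall_fin_succ]

theorem diracAlpha_anticomm (i j : Fin 3) :
    diracAlpha i * diracAlpha j + diracAlpha j * diracAlpha i = if i = j then 2 else 0 := by
  fin_cases i <;> fin_cases j <;>
    simp [diracAlpha, ← Matrix.ext_iff, Fin.forall_fin_succ, Matrix.ofNat_apply,
      one_add_one_eq_two]

def diracAlphaDot : E3 →ₗ[ℝ] Matrix (Fin 4) (Fin 4) ℂ where
  toFun ξ := ∑ j, ξ j • diracAlpha j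
  map_add' ξ η := by simp [add_smul, Finset.sum_add_distrib]
  map_smul' r ξ := by simp [Finset.smul_sum, smul_smul]

theorem diracAlphaDot_mul_self (ξ : E3) :
    diracAlphaDot ξ * diracAlphaDot ξ = ‖ξ‖ ^ 2 • (1 : Matrix (Fin 4) (Fin 4) ℂ) := by
  rw [EuclideanSpace.real_norm_sq_eq]
  exact sum_smul_mul_self_of_anticomm _ diracAlpha_anticomm _

theorem isSelfAdjoint_diracAlphaDot (ξ : E3) : IsSelfAdjoint (diracAlphaDot ξ) :=
  isSelfAdjoint_sum _ fun j _ => (IsSelfAdjoint.all _).smul (diracAlpha_isHermitian j)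

theorem norm_diracAlphaDot (ξ : E3) : ‖diracAlphaDot ξ‖ = ‖ξ‖ := by
  have h := (isSelfAdjoint_diracAlphaDot ξ).norm_mul_self
  rw [diracAlphaDot_mul_self, norm_smul, CStarRing.norm_one, mul_one, Real.norm_eq_abs,
    abs_of_nonneg (sq_nonneg _)] at h
  exact ((pow_left_inj₀ (norm_nonneg _) (norm_nonneg _) two_ne_zero).1 h).symm

theorem diracPi_eq (ξ : E3) : diracPi ξ = (1 / 2 : ℂ) • (1 + diracAlphaDot (‖ξ‖⁻¹ • ξ)) := by
  simp only [diracPi, map_smul, diracAlphaDot, LinearMap.coe_mk, AddHom.coe_mk, Complex.coe_smul]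

theorem norm_diracPi_le_one (ξ : E3) : ‖diracPi ξ‖ ≤ 1 := by
  have hu : ‖‖ξ‖⁻¹ • ξ‖ ≤ 1 := by
    simpa only [norm_smul, norm_inv, norm_norm] using inv_mul_le_one_of_le₀ le_rfl (norm_nonneg ξ)
  calc ‖diracPi ξ‖ ≤ ‖(1 / 2 : ℂ)‖ * (‖(1 : Matrix (Fin 4) (Fin 4) ℂ)‖ + ‖‖ξ‖⁻¹ • ξ‖) := by
        rw [diracPi_eq, norm_smul, ← norm_diracAlphaDot (‖ξ‖⁻¹ • ξ)]
        gcongr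
        exact norm_add_le _ _
    _ ≤ 1 := by rw [CStarRing.norm_one]; norm_num; linarith

theorem diracPi_mul_diracPi_neg_self {ξ : E3} (hξ : ξ ≠ 0) : diracPi ξ * diracPi (-ξ) = 0 := by
  have hsq : diracAlphaDot (‖ξ‖⁻¹ • ξ) * diracAlphaDot (‖ξ‖⁻¹ • ξ) = 1 := by
    have hu : ‖‖ξ‖⁻¹ • ξ‖ = 1 := by simpa using norm_smul_inv_norm (𝕜 := ℝ) hξ
    rw [diracAlphaDot_mul_self, hu, one_pow, one_smul]
  rw [diracPi_eq, diracPi_eq, norm_neg, smul_neg, map_neg, smul_mul_smul_comm, ← sub_eq_add_neg,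
    add_mul, mul_sub, mul_sub, hsq]
  simp only [one_mul, mul_one, sub_add_sub_cancel, sub_self, smul_zero]

theorem diracPi_mul_diracPi_neg {ξ₁ : E3} (hξ₁ : ξ₁ ≠ 0) (ξ₂ : E3) :
    diracPi ξ₁ * diracPi (-ξ₂) =
      (1 / 2 : ℂ) • (diracPi ξ₁ * diracAlphaDot (‖ξ₁‖⁻¹ • ξ₁ - ‖ξ₂‖⁻¹ • ξ₂)) := by
  rw [← sub_zero (diracPi ξ₁ * diracPi (-ξ₂)), ← diracPi_mul_diracPi_neg_self hξ₁, ← mul_sub,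
    diracPi_eq (-ξ₂), diracPi_eq (-ξ₁), ← smul_sub, mul_smul_comm, map_sub]
  simp only [norm_neg, smul_neg, map_neg]
  abel_nf

theorem norm_diracPi_mul_diracPi_neg_le {ξ₁ : E3} (hξ₁ : ξ₁ ≠ 0) (ξ₂ : E3) :
    ‖diracPi ξ₁ * diracPi (-ξ₂)‖ ≤ ‖‖ξ₁‖⁻¹ • ξ₁ - ‖ξ₂‖⁻¹ • ξ₂‖ / 2 := by
  rw [diracPi_mul_diracPi_neg hξ₁, norm_smul]
  calc ‖(1 / 2 : ℂ)‖ * ‖diracPi ξ₁ * diracAlphaDot (‖ξ₁‖⁻¹ • ξ₁ - ‖ξ₂‖⁻¹ • ξ₂)‖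
      ≤ ‖(1 / 2 : ℂ)‖ * (1 * ‖‖ξ₁‖⁻¹ • ξ₁ - ‖ξ₂‖⁻¹ • ξ₂‖) := by
        rw [← norm_diracAlphaDot (‖ξ₁‖⁻¹ • ξ₁ - ‖ξ₂‖⁻¹ • ξ₂)]
        gcongr
        exact (norm_mul_le _ _).trans (by gcongr; exact norm_diracPi_le_one ξ₁)
    _ = ‖‖ξ₁‖⁻¹ • ξ₁ - ‖ξ₂‖⁻¹ • ξ₂‖ / 2 := by norm_num; ring

/-- There is an absolute constant `C` such that for all nonzero `ξ₁, ξ₂ ∈ ℝ³` and all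
`z ∈ ℂ⁴`, `|Π(ξ₁)Π(−ξ₂)z| ≤ C |z| θ(ξ₁,ξ₂)`. -/
theorem diracPi_mul_diracPi_neg_bound :
    ∃ C : ℝ, 0 < C ∧
      ∀ (ξ₁ ξ₂ : E3), ξ₁ ≠ 0 → ξ₂ ≠ 0 → ∀ z : C4,
        ‖(Matrix.toEuclideanLin (diracPi ξ₁ * diracPi (-ξ₂))) z‖ ≤
          C * ‖z‖ * angle ξ₁ ξ₂ := by
  refine ⟨1 / 2, one_half_pos, fun ξ₁ ξ₂ hξ₁ hξ₂ z => ?_⟩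
  calc ‖(Matrix.toEuclideanLin (diracPi ξ₁ * diracPi (-ξ₂))) z‖
      ≤ ‖diracPi ξ₁ * diracPi (-ξ₂)‖ * ‖z‖ := Matrix.l2_opNorm_mulVec _ z
    _ ≤ angle ξ₁ ξ₂ / 2 * ‖z‖ := by
        gcongr
        exact (norm_diracPi_mul_diracPi_neg_le hξ₁ ξ₂).trans
          (by gcongr; exact norm_inv_norm_smul_sub_le_angle hξ₁ hξ₂)
    _ = 1 / 2 * ‖z‖ * angle ξ₁ ξ₂ := by ring
end
end

section
/- Consider vectors X₀ = (τ₀,ξ₀), X₁ = (τ₁,ξ₁), X₂ = (τ₂,ξ₂) in R^{1+3} with X₀ = X₁ − X₂ and ξ₁, ξ₂ ≠ 0. Given signs ±₀, ±₁, ±₂, set h_j = τ_j ±_j |ξ_j| and θ₁₂ = θ(±₁ξ₁, ±₂ξ₂). Then max(|h₀|,|h₁|,|h₂|) ≳ min(|ξ₁|,|ξ₂|)·θ₁₂², with an absolute implicit constant. -/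
/-!
Both defects `‖x‖ + ‖y‖ - ‖x + y‖` and `‖x - y‖ - |‖x‖ - ‖y‖|` are `2 (‖x‖‖y‖ - ⟪x, y⟫)` divided by
a quantity at most `2 (‖x‖ + ‖y‖)`, and `‖x‖‖y‖ - ⟪x, y⟫ = ‖x‖‖y‖ (1 - cos θ) ≳ ‖x‖‖y‖ θ²`.
Since `h₀ - h₁ + h₂ = ±₀‖ξ₀‖ - ±₁‖ξ₁‖ + ±₂‖ξ₂‖`, its modulus bounds the first defect of
`(±₁ξ₁, ±₂ξ₂)` when `±₁ ≠ ±₂` (their sum is `±ξ₀`) and the second one when `±₁ = ±₂`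
(their difference is `±ξ₀`).
-/

open InnerProductGeometry Real
open scoped RealInnerProductSpace

theorem abs_sub_add_le_three_mul_max {α : Type*} [Ring α] [LinearOrder α] [IsOrderedRing α]
    (a b c : α) : |a - b + c| ≤ 3 * max |a| (max |b| |c|) := by
  have hb : |b| ≤ max |a| (max |b| |c|) := (le_max_left _ _).trans (le_max_right _ _)
  have hc : |c| ≤ max |a| (max |b| |c|) := (le_max_right _ _).trans (le_max_right _ _)
  calc |a - b + c| ≤ |a| + |b| + |c| := by
        simpa only [sub_eq_add_neg, abs_neg] using abs_add_three a (-b) c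
    _ ≤ max |a| (max |b| |c|) + max |a| (max |b| |c|) + max |a| (max |b| |c|) :=
        add_le_add_three (le_max_left _ _) hb hc
    _ = 3 * max |a| (max |b| |c|) := by noncomm_ring

section InnerProductSpace

variable {E : Type*} [NormedAddCommGroup E] [InnerProductSpace ℝ E]

theorem min_norm_mul_angle_sq_le (x y : E) :
    min ‖x‖ ‖y‖ * angle x y ^ 2 ≤ π ^ 2 * ((‖x‖ * ‖y‖ - ⟪x, y⟫) / (‖x‖ + ‖y‖)) := by
  rcases (add_nonneg (norm_nonneg x) (norm_nonneg y)).eq_or_lt with hsum | hsum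
  · have hx : ‖x‖ = 0 := by linarith [norm_nonneg x, norm_nonneg y]
    rw [← hsum, div_zero, mul_zero, hx, min_eq_left (norm_nonneg y), zero_mul]
  set θ := angle x y
  have hcos : 2 / π ^ 2 * θ ^ 2 ≤ 1 - cos θ := by
    have := cos_le_one_sub_mul_cos_sq (abs_le.2 ⟨by linarith [angle_nonneg x y, pi_pos],
      angle_le_pi x y⟩)
    linarith
  have hmin : min ‖x‖ ‖y‖ * (‖x‖ + ‖y‖) ≤ 2 * (‖x‖ * ‖y‖) := by
    nlinarith [min_le_left ‖x‖ ‖y‖, min_le_right ‖x‖ ‖y‖, norm_nonneg x, norm_nonneg y]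
  rw [mul_div_assoc', le_div_iff₀ hsum, ← cos_angle_mul_norm_mul_norm]
  calc min ‖x‖ ‖y‖ * θ ^ 2 * (‖x‖ + ‖y‖) ≤ 2 * (‖x‖ * ‖y‖) * θ ^ 2 := by
        nlinarith [sq_nonneg θ]
    _ = π ^ 2 * (‖x‖ * ‖y‖ * (2 / π ^ 2 * θ ^ 2)) := by field_simp
    _ ≤ π ^ 2 * (‖x‖ * ‖y‖ * (1 - cos θ)) := by gcongr
    _ = π ^ 2 * (‖x‖ * ‖y‖ - cos θ * (‖x‖ * ‖y‖)) := by ring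

theorem min_norm_mul_angle_sq_le_norm_add_norm_sub_norm_add (x y : E) :
    min ‖x‖ ‖y‖ * angle x y ^ 2 ≤ π ^ 2 * (‖x‖ + ‖y‖ - ‖x + y‖) := by
  refine (min_norm_mul_angle_sq_le x y).trans (mul_le_mul_of_nonneg_left ?_ (by positivity))
  refine div_le_of_le_mul₀ (by positivity) (sub_nonneg.2 (norm_add_le x y)) ?_
  nlinarith [norm_add_sq_real x y, norm_add_le x y, norm_nonneg (x + y)]

theorem min_norm_mul_angle_sq_le_norm_sub_sub_abs_norm_sub_norm (x y : E) :
    min ‖x‖ ‖y‖ * angle x y ^ 2 ≤ π ^ 2 * (‖x - y‖ - |‖x‖ - ‖y‖|) := by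
  refine (min_norm_mul_angle_sq_le x y).trans (mul_le_mul_of_nonneg_left ?_ (by positivity))
  refine div_le_of_le_mul₀ (by positivity) (sub_nonneg.2 (abs_norm_sub_norm_le x y)) ?_
  nlinarith [norm_sub_sq_real x y, abs_norm_sub_norm_le x y, norm_sub_le x y,
    sq_abs (‖x‖ - ‖y‖), (abs_norm_sub_norm_le x y).trans (norm_sub_le x y)]

theorem min_norm_mul_angle_smul_smul_sq_le (x y : E) {s₁ s₂ : ℝ} (hs₁ : s₁ = 1 ∨ s₁ = -1)
    (hs₂ : s₂ = 1 ∨ s₂ = -1) :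
    min ‖x‖ ‖y‖ * angle (s₁ • x) (s₂ • y) ^ 2 ≤
      π ^ 2 * |‖x - y‖ - (|s₁ * ‖x‖ - s₂ * ‖y‖|)| := by
  have hsub := min_norm_mul_angle_sq_le_norm_sub_sub_abs_norm_sub_norm x y
  have hadd := min_norm_mul_angle_sq_le_norm_add_norm_sub_norm_add x (-y)
  rw [norm_neg, ← sub_eq_add_neg] at hadd
  have hsub_abs : |‖x - y‖ - (|‖x‖ - ‖y‖|)| = ‖x - y‖ - |‖x‖ - ‖y‖| :=
    abs_of_nonneg (sub_nonneg.2 (abs_norm_sub_norm_le x y))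
  have hadd_abs : |‖x - y‖ - (‖x‖ + ‖y‖)| = ‖x‖ + ‖y‖ - ‖x - y‖ := by
    rw [abs_sub_comm]; exact abs_of_nonneg (sub_nonneg.2 (norm_sub_le x y))
  rcases hs₁ with rfl | rfl <;> rcases hs₂ with rfl | rfl
  · rwa [one_smul, one_smul, one_mul, one_mul, hsub_abs]
  · rwa [one_smul, neg_one_smul, one_mul, neg_one_mul, sub_neg_eq_add,
      abs_of_nonneg (by positivity : 0 ≤ ‖x‖ + ‖y‖), hadd_abs]
  · rwa [neg_one_smul, one_smul, ← angle_neg_neg, neg_neg, neg_one_mul, one_mul, ← neg_add',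
      abs_neg, abs_of_nonneg (by positivity : 0 ≤ ‖x‖ + ‖y‖), hadd_abs]
  · rwa [neg_one_smul, neg_one_smul, angle_neg_neg, neg_one_mul, neg_one_mul, neg_sub_neg,
      abs_sub_comm ‖y‖, hsub_abs]

end InnerProductSpace

/-- For a bilinear interaction `X₀ = X₁ − X₂` with `ξ₁, ξ₂ ≠ 0` and signs `±₀,±₁,±₂`,
setting `h_j = τ_j ±_j |ξ_j|` and `θ₁₂ = θ(±₁ξ₁, ±₂ξ₂)`,
one has `max(|h₀|,|h₁|,|h₂|) ≳ min(|ξ₁|,|ξ₂|)·θ₁₂²` with absolute implicit constant. -/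
theorem bilinear_interaction_angle_bound :
    ∃ C : ℝ, 0 < C ∧
      ∀ (s₀ s₁ s₂ : ℝ), (s₀ = 1 ∨ s₀ = -1) → (s₁ = 1 ∨ s₁ = -1) → (s₂ = 1 ∨ s₂ = -1) →
      ∀ (τ₀ τ₁ τ₂ : ℝ) (ξ₀ ξ₁ ξ₂ : EuclideanSpace ℝ (Fin 3)),
        ξ₁ ≠ 0 → ξ₂ ≠ 0 → τ₀ = τ₁ - τ₂ → ξ₀ = ξ₁ - ξ₂ →
        min ‖ξ₁‖ ‖ξ₂‖ * angle (s₁ • ξ₁) (s₂ • ξ₂) ^ 2 ≤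
          C * max (|τ₀ + s₀ * ‖ξ₀‖|) (max (|τ₁ + s₁ * ‖ξ₁‖|) (|τ₂ + s₂ * ‖ξ₂‖|)) := by
  refine ⟨3 * π ^ 2, by positivity, ?_⟩
  rintro s₀ s₁ s₂ hs₀ hs₁ hs₂ τ₀ τ₁ τ₂ ξ₀ ξ₁ ξ₂ - - rfl rfl
  have hs₀_abs : |s₀ * ‖ξ₁ - ξ₂‖| = ‖ξ₁ - ξ₂‖ := by
    rcases hs₀ with rfl | rfl <;> simp
  calc min ‖ξ₁‖ ‖ξ₂‖ * angle (s₁ • ξ₁) (s₂ • ξ₂) ^ 2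
      ≤ π ^ 2 * |‖ξ₁ - ξ₂‖ - (|s₁ * ‖ξ₁‖ - s₂ * ‖ξ₂‖|)| :=
        min_norm_mul_angle_smul_smul_sq_le ξ₁ ξ₂ hs₁ hs₂
    _ ≤ π ^ 2 * |s₀ * ‖ξ₁ - ξ₂‖ - (s₁ * ‖ξ₁‖ - s₂ * ‖ξ₂‖)| := by
        refine mul_le_mul_of_nonneg_left ?_ (by positivity)
        simpa only [hs₀_abs] using abs_abs_sub_abs_le_abs_sub (s₀ * ‖ξ₁ - ξ₂‖) _
    _ = π ^ 2 * |(τ₁ - τ₂ + s₀ * ‖ξ₁ - ξ₂‖) - (τ₁ + s₁ * ‖ξ₁‖) + (τ₂ + s₂ * ‖ξ₂‖)| := by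
        ring_nf
    _ ≤ π ^ 2 * (3 * max (|τ₁ - τ₂ + s₀ * ‖ξ₁ - ξ₂‖|)
          (max (|τ₁ + s₁ * ‖ξ₁‖|) (|τ₂ + s₂ * ‖ξ₂‖|))) := by
        gcongr
        exact abs_sub_add_le_three_mul_max _ _ _
    _ = _ := by ring
end

section
/- With the setup of a bilinear interaction X₀ = X₁ − X₂ (ξ_j ≠ 0, h_j = τ_j ±_j |ξ_j|) and assuming additionally |ξ₀| ≪ |ξ₁| ∼ |ξ₂| and ±₁ ≠ ±₂, one has θ(±₁ξ₁, ±₂ξ₂) ∼ 1 and max(|h₀|,|h₁|,|h₂|) ≳ min(|ξ₁|,|ξ₂|). -/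
open InnerProductGeometry RealInnerProductSpace

/-!
Since `|ξ₁ - ξ₂|` is small compared with `|ξ₁|`, the vectors `ξ₁, ξ₂` make an acute angle, so
`±₁ξ₁` and `±₂ξ₂ = ∓₁ξ₂` make an obtuse one. For the modulations, `τ₀ = τ₁ - τ₂` gives
`h₁ - h₂ - h₀ = ±₁(|ξ₁| + |ξ₂|) ∓₀ |ξ₀|`, whose size is at least `|ξ₁| + |ξ₂| - |ξ₀|`;
hence one of the three `|h_j|` is at least a third of it.
-/

section InnerProductSpace

variable {V : Type*} [NormedAddCommGroup V] [InnerProductSpace ℝ V]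

theorem inner_nonneg_of_norm_sub_le_norm_left {x y : V} (h : ‖x - y‖ ≤ ‖x‖) : 0 ≤ ⟪x, y⟫ := by
  have hsq : ‖x - y‖ ^ 2 ≤ ‖x‖ ^ 2 := pow_le_pow_left₀ (norm_nonneg _) h 2
  nlinarith [norm_sub_sq_real x y, sq_nonneg ‖y‖]

theorem angle_le_pi_div_two_of_norm_sub_le_norm_left {x y : V} (h : ‖x - y‖ ≤ ‖x‖) :
    angle x y ≤ Real.pi / 2 :=
  Real.arccos_le_pi_div_two.2 <|
    div_nonneg (inner_nonneg_of_norm_sub_le_norm_left h) (by positivity)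

theorem angle_smul_neg_smul {s : ℝ} (hs : s ≠ 0) (x y : V) :
    angle (s • x) (-s • y) = Real.pi - angle x y := by
  rw [neg_smul, angle_neg_right, angle_smul_smul hs]

end InnerProductSpace

theorem eq_neg_of_ne_of_eq_one_or_eq_neg_one {s t : ℝ} (hs : s = 1 ∨ s = -1)
    (ht : t = 1 ∨ t = -1) (hne : s ≠ t) : t = -s := by
  rcases hs with rfl | rfl <;> rcases ht with rfl | rfl <;> simp_all

theorem abs_sub_sub_le_three_mul_max (a b c : ℝ) : |a - b - c| ≤ 3 * max |c| (max |a| |b|) := by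
  have htri : |a - b - c| ≤ |a| + |b| + |c| := by
    calc |a - b - c| ≤ |a - b| + |c| := abs_sub _ _
      _ ≤ |a| + |b| + |c| := by gcongr; exact abs_sub _ _
  have ha : |a| ≤ max |c| (max |a| |b|) := (le_max_left _ _).trans (le_max_right _ _)
  have hb : |b| ≤ max |c| (max |a| |b|) := (le_max_right _ _).trans (le_max_right _ _)
  linarith [le_max_left |c| (max |a| |b|)]

theorem sub_abs_le_abs_mul_sub_mul {s t u v : ℝ} (hs : |s| = 1) (ht : |t| = 1) (hu : 0 ≤ u) :
    u - |v| ≤ |s * u - t * v| :=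
  calc u - |v| = |s * u| - |t * v| := by rw [abs_mul, abs_mul, hs, ht, abs_of_nonneg hu]; ring
    _ ≤ |s * u - t * v| := abs_sub_abs_le_abs_sub _ _

/-- For a bilinear interaction `X₀ = X₁ − X₂` (`ξ_j ≠ 0`, `h_j = τ_j ±_j |ξ_j|`) with
`|ξ₀| ≪ |ξ₁| ∼ |ξ₂|` and opposite signs `±₁ ≠ ±₂`, the angle
`θ(±₁ξ₁,±₂ξ₂)` is `∼ 1` and `max(|h₀|,|h₁|,|h₂|) ≳ min(|ξ₁|,|ξ₂|)`. -/
theorem bilinear_interaction_low_output_opposite_signs :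
    ∃ ε c : ℝ, 0 < ε ∧ 0 < c ∧
      ∀ (s₀ s₁ s₂ : ℝ), (s₀ = 1 ∨ s₀ = -1) → (s₁ = 1 ∨ s₁ = -1) → (s₂ = 1 ∨ s₂ = -1) →
      ∀ (τ₀ τ₁ τ₂ : ℝ) (ξ₀ ξ₁ ξ₂ : EuclideanSpace ℝ (Fin 3)),
        ξ₁ ≠ 0 → ξ₂ ≠ 0 → τ₀ = τ₁ - τ₂ → ξ₀ = ξ₁ - ξ₂ →
        ‖ξ₀‖ ≤ ε * min ‖ξ₁‖ ‖ξ₂‖ → s₁ ≠ s₂ →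
        (c ≤ angle (s₁ • ξ₁) (s₂ • ξ₂) ∧ angle (s₁ • ξ₁) (s₂ • ξ₂) ≤ Real.pi) ∧
        c * min ‖ξ₁‖ ‖ξ₂‖ ≤
          max (|τ₀ + s₀ * ‖ξ₀‖|) (max (|τ₁ + s₁ * ‖ξ₁‖|) (|τ₂ + s₂ * ‖ξ₂‖|)) := by
  refine ⟨1 / 2, 1 / 2, by norm_num, by norm_num, ?_⟩
  intro s₀ s₁ s₂ hs₀ hs₁ hs₂ τ₀ τ₁ τ₂ ξ₀ ξ₁ ξ₂ hξ₁ hξ₂ hτ hξ hsmall hne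
  obtain rfl := eq_neg_of_ne_of_eq_one_or_eq_neg_one hs₁ hs₂ hne
  have hmin : 0 < min ‖ξ₁‖ ‖ξ₂‖ := lt_min (norm_pos_iff.2 hξ₁) (norm_pos_iff.2 hξ₂)
  have hmin₁ := min_le_left ‖ξ₁‖ ‖ξ₂‖
  have hmin₂ := min_le_right ‖ξ₁‖ ‖ξ₂‖
  refine ⟨⟨?_, angle_le_pi _ _⟩, ?_⟩
  · have hacute : angle ξ₁ ξ₂ ≤ Real.pi / 2 :=
      angle_le_pi_div_two_of_norm_sub_le_norm_left (by rw [← hξ]; linarith)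
    have hs₁₀ : s₁ ≠ 0 := by rcases hs₁ with rfl | rfl <;> norm_num
    rw [angle_smul_neg_smul hs₁₀]
    linarith [Real.pi_gt_three]
  · have hres : (τ₁ + s₁ * ‖ξ₁‖) - (τ₂ + -s₁ * ‖ξ₂‖) - (τ₀ + s₀ * ‖ξ₀‖) =
        s₁ * (‖ξ₁‖ + ‖ξ₂‖) - s₀ * ‖ξ₀‖ := by rw [hτ]; ring
    have hlower := sub_abs_le_abs_mul_sub_mul (v := ‖ξ₀‖) ((abs_eq zero_le_one).2 hs₁)
      ((abs_eq zero_le_one).2 hs₀) (add_nonneg (norm_nonneg ξ₁) (norm_nonneg ξ₂))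
    have hupper := abs_sub_sub_le_three_mul_max (τ₁ + s₁ * ‖ξ₁‖) (τ₂ + -s₁ * ‖ξ₂‖)
      (τ₀ + s₀ * ‖ξ₀‖)
    rw [hres] at hupper
    rw [abs_norm] at hlower
    linarith
end

section
/- For all signs and any bilinear interaction X₀ = X₁ − X₂ with all ξ_j ≠ 0, max(|h₀|,|h₁|,|h₂|) ≳ |ξ₀| · min(θ₀₁, θ₀₂)², where h_j = τ_j ±_j |ξ_j| and θ₀ₖ = θ(±₀ξ₀, ±ₖξₖ). -/
open InnerProductGeometry Real RealInnerProductSpace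

variable {E : Type*} [NormedAddCommGroup E] [InnerProductSpace ℝ E]

private lemma sq_le_five_one_sub_cos {θ : ℝ} (h0 : 0 ≤ θ) (hπ : θ ≤ π) :
    θ ^ 2 ≤ 5 * (1 - Real.cos θ) := by
  have h := Real.cos_le_one_sub_mul_cos_sq (x := θ) (by rwa [abs_of_nonneg h0])
  have hp : (0:ℝ) < π ^ 2 := by positivity
  have h1 : 2 / π ^ 2 * θ ^ 2 ≤ 1 - Real.cos θ := by linarith
  rw [div_mul_eq_mul_div] at h1
  have h2 : 2 * θ ^ 2 ≤ (1 - Real.cos θ) * π ^ 2 := (div_le_iff₀ hp).mp h1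
  have hpi : π ^ 2 ≤ 10 := by nlinarith [Real.pi_lt_d2, Real.pi_pos]
  nlinarith [Real.cos_le_one θ]

private lemma oneSubCos_eq (x y : E) (hx : x ≠ 0) (hy : y ≠ 0) :
    ‖x‖ * ‖y‖ * (1 - Real.cos (angle x y)) = ‖x‖ * ‖y‖ - ⟪x, y⟫ := by
  rw [cos_angle]
  have hx' : ‖x‖ ≠ 0 := norm_ne_zero_iff.2 hx
  have hy' : ‖y‖ ≠ 0 := norm_ne_zero_iff.2 hy
  field_simp

/-- key bound for the output angle against the *larger* input. -/
private lemma lemA' (a b : E) (ha : a ≠ 0) (hb : b ≠ 0) (hc : a + b ≠ 0)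
    (hAB : ‖a‖ ≤ ‖b‖) :
    ‖a + b‖ * (1 - Real.cos (angle (a + b) b)) ≤ 3 * (‖a‖ + ‖b‖ - ‖a + b‖) := by
  have hA : (0:ℝ) < ‖a‖ := norm_pos_iff.2 ha
  have hB : (0:ℝ) < ‖b‖ := norm_pos_iff.2 hb
  have hC : (0:ℝ) < ‖a + b‖ := norm_pos_iff.2 hc
  have hCn2 : ‖a + b‖ ^ 2 = ‖a‖ ^ 2 + 2 * ⟪a, b⟫ + ‖b‖ ^ 2 := norm_add_sq_real a b
  have htri : ‖a + b‖ ≤ ‖a‖ + ‖b‖ := norm_add_le a b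
  have heq : ‖a + b‖ * ‖b‖ * (1 - Real.cos (angle (a + b) b))
      = ‖a + b‖ * ‖b‖ - (⟪a, b⟫ + ‖b‖ ^ 2) := by
    rw [oneSubCos_eq (a + b) b hc hb, inner_add_left, real_inner_self_eq_norm_sq]
  have ht : 0 ≤ 1 - Real.cos (angle (a + b) b) := by
    have := Real.cos_le_one (angle (a + b) b); linarith
  have hint : 0 ≤ (‖a‖ + ‖b‖ - ‖a + b‖) * (7 * ‖b‖ - ‖a‖ - ‖a + b‖) := by
    apply mul_nonneg <;> linarith
  nlinarith [mul_le_mul_of_nonneg_left htri hB.le, mul_pos hC hB]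

private lemma lemA (a b : E) (ha : a ≠ 0) (hb : b ≠ 0) (hc : a + b ≠ 0) :
    ‖a + b‖ * min (angle (a + b) a) (angle (a + b) b) ^ 2
      ≤ 15 * (‖a‖ + ‖b‖ - ‖a + b‖) := by
  set m := min (angle (a + b) a) (angle (a + b) b) with hm
  have hm0 : 0 ≤ m := le_min (angle_nonneg _ _) (angle_nonneg _ _)
  rcases le_total ‖a‖ ‖b‖ with hAB | hAB
  · have key := lemA' a b ha hb hc hAB
    have hmle : m ≤ angle (a + b) b := min_le_right _ _
    have hsq : m ^ 2 ≤ 5 * (1 - Real.cos (angle (a + b) b)) := by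
      calc m ^ 2 ≤ angle (a + b) b ^ 2 :=
            pow_le_pow_left₀ hm0 hmle 2
        _ ≤ _ := sq_le_five_one_sub_cos (angle_nonneg _ _) (angle_le_pi _ _)
    nlinarith [norm_pos_iff.2 hc]
  · have hc' : b + a ≠ 0 := by rwa [add_comm]
    have key := lemA' b a hb ha hc' hAB
    rw [add_comm b a] at key
    have hmle : m ≤ angle (a + b) a := min_le_left _ _
    have hsq : m ^ 2 ≤ 5 * (1 - Real.cos (angle (a + b) a)) := by
      calc m ^ 2 ≤ angle (a + b) a ^ 2 :=
            pow_le_pow_left₀ hm0 hmle 2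
        _ ≤ _ := sq_le_five_one_sub_cos (angle_nonneg _ _) (angle_le_pi _ _)
    nlinarith [norm_pos_iff.2 hc]

private lemma lemB (a b : E) (ha : a ≠ 0) (hb : b ≠ 0) (hc : a + b ≠ 0) :
    ‖a‖ * min (angle a b) (angle a (a + b)) ^ 2
      ≤ 15 * (‖a‖ + ‖b‖ - ‖a + b‖) := by
  have hA : (0:ℝ) < ‖a‖ := norm_pos_iff.2 ha
  have hB : (0:ℝ) < ‖b‖ := norm_pos_iff.2 hb
  have hC : (0:ℝ) < ‖a + b‖ := norm_pos_iff.2 hc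
  have hCn2 : ‖a + b‖ ^ 2 = ‖a‖ ^ 2 + 2 * ⟪a, b⟫ + ‖b‖ ^ 2 := norm_add_sq_real a b
  have htri : ‖a + b‖ ≤ ‖a‖ + ‖b‖ := norm_add_le a b
  set m := min (angle a b) (angle a (a + b)) with hm
  have hm0 : 0 ≤ m := le_min (angle_nonneg _ _) (angle_nonneg _ _)
  rcases le_total ‖a‖ (2 * ‖b‖) with hAB | hAB
  · -- use angle a b
    have heq : ‖a‖ * ‖b‖ * (1 - Real.cos (angle a b)) = ‖a‖ * ‖b‖ - ⟪a, b⟫ :=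
      oneSubCos_eq a b ha hb
    have ht : 0 ≤ 1 - Real.cos (angle a b) := by
      have := Real.cos_le_one (angle a b); linarith
    have key : ‖a‖ * (1 - Real.cos (angle a b)) ≤ 3 * (‖a‖ + ‖b‖ - ‖a + b‖) := by
      have hint : 0 ≤ (‖a‖ + ‖b‖ - ‖a + b‖) * (5 * ‖b‖ - ‖a‖ - ‖a + b‖) := by
        apply mul_nonneg <;> linarith
      nlinarith
    have hmle : m ≤ angle a b := min_le_left _ _
    have hsq : m ^ 2 ≤ 5 * (1 - Real.cos (angle a b)) := by
      calc m ^ 2 ≤ angle a b ^ 2 := pow_le_pow_left₀ hm0 hmle 2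
        _ ≤ _ := sq_le_five_one_sub_cos (angle_nonneg _ _) (angle_le_pi _ _)
    nlinarith
  · -- use angle a (a+b)
    have heq : ‖a‖ * ‖a + b‖ * (1 - Real.cos (angle a (a + b)))
        = ‖a‖ * ‖a + b‖ - (‖a‖ ^ 2 + ⟪a, b⟫) := by
      rw [oneSubCos_eq a (a + b) ha hc, inner_add_right, real_inner_self_eq_norm_sq]
    have ht : 0 ≤ 1 - Real.cos (angle a (a + b)) := by
      have := Real.cos_le_one (angle a (a + b)); linarith
    have key : ‖a‖ * (1 - Real.cos (angle a (a + b))) ≤ 3 * (‖a‖ + ‖b‖ - ‖a + b‖) := by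
      have hint : 0 ≤ (5 * ‖a + b‖ + ‖a‖ - ‖b‖) * (‖a‖ + ‖b‖ - ‖a + b‖) := by
        apply mul_nonneg <;> linarith
      nlinarith
    have hmle : m ≤ angle a (a + b) := min_le_right _ _
    have hsq : m ^ 2 ≤ 5 * (1 - Real.cos (angle a (a + b))) := by
      calc m ^ 2 ≤ angle a (a + b) ^ 2 := pow_le_pow_left₀ hm0 hmle 2
        _ ≤ _ := sq_le_five_one_sub_cos (angle_nonneg _ _) (angle_le_pi _ _)
    nlinarith

private lemma angle_neg_left_eq (x y : E) : angle (-x) y = angle x (-y) := by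
  rw [angle_neg_left, angle_neg_right]

private lemma sigma_bound (σ₁ σ₂ : ℝ) (h1 : σ₁ = 1 ∨ σ₁ = -1) (h2 : σ₂ = 1 ∨ σ₂ = -1)
    (ξ₀ ξ₁ ξ₂ : E) (n0 : ξ₀ ≠ 0) (n1 : ξ₁ ≠ 0) (n2 : ξ₂ ≠ 0) (hξ : ξ₀ = ξ₁ - ξ₂) :
    ‖ξ₀‖ * min (angle ξ₀ (σ₁ • ξ₁)) (angle ξ₀ (σ₂ • ξ₂)) ^ 2 ≤
      15 * |‖ξ₀‖ - σ₁ * ‖ξ₁‖ + σ₂ * ‖ξ₂‖| := by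
  rcases h1 with rfl | rfl <;> rcases h2 with rfl | rfl
  · -- σ₁ = 1, σ₂ = 1 : ξ₁ = ξ₀ + ξ₂, lemB with a = ξ₀, b = ξ₂
    have hsum : ξ₀ + ξ₂ = ξ₁ := by rw [hξ]; abel
    have key := lemB ξ₀ ξ₂ n0 n2 (hsum ▸ n1)
    rw [hsum] at key
    have habs : |‖ξ₀‖ - 1 * ‖ξ₁‖ + 1 * ‖ξ₂‖| = ‖ξ₀‖ + ‖ξ₂‖ - ‖ξ₁‖ := by
      rw [abs_of_nonneg] <;>
        · have := norm_add_le ξ₀ ξ₂; rw [hsum] at this; linarith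
    rw [habs, one_smul, one_smul, min_comm]
    linarith
  · -- σ₁ = 1, σ₂ = -1 : ξ₀ = ξ₁ + (-ξ₂), lemA with a = ξ₁, b = -ξ₂
    have hsum : ξ₁ + -ξ₂ = ξ₀ := by rw [hξ]; abel
    have key := lemA ξ₁ (-ξ₂) n1 (neg_ne_zero.2 n2) (hsum ▸ n0)
    rw [hsum, norm_neg] at key
    have habs : |‖ξ₀‖ - 1 * ‖ξ₁‖ + -1 * ‖ξ₂‖| = ‖ξ₁‖ + ‖ξ₂‖ - ‖ξ₀‖ := by
      rw [abs_of_nonpos] <;>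
        · have := norm_add_le ξ₁ (-ξ₂); rw [hsum, norm_neg] at this; linarith
    rw [habs, one_smul, neg_one_smul]
    linarith
  · -- σ₁ = -1, σ₂ = 1 : trivial case
    have h10 : (0:ℝ) ≤ ‖ξ₁‖ := norm_nonneg _
    have h20 : (0:ℝ) ≤ ‖ξ₂‖ := norm_nonneg _
    have h00 : (0:ℝ) ≤ ‖ξ₀‖ := norm_nonneg _
    have habs : |‖ξ₀‖ - (-1) * ‖ξ₁‖ + 1 * ‖ξ₂‖| = ‖ξ₀‖ + ‖ξ₁‖ + ‖ξ₂‖ := by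
      rw [abs_of_nonneg] <;> linarith
    rw [habs]
    set m := min (angle ξ₀ ((-1:ℝ) • ξ₁)) (angle ξ₀ ((1:ℝ) • ξ₂)) with hm
    have hm0 : 0 ≤ m := le_min (angle_nonneg _ _) (angle_nonneg _ _)
    have hmpi : m ≤ π := le_trans (min_le_left _ _) (angle_le_pi _ _)
    have hpi : π ^ 2 ≤ 10 := by nlinarith [Real.pi_lt_d2, Real.pi_pos]
    have : m ^ 2 ≤ 10 := le_trans (pow_le_pow_left₀ hm0 hmpi 2) hpi
    nlinarith
  · -- σ₁ = -1, σ₂ = -1 : -ξ₂ = ξ₀ + (-ξ₁), lemB with a = ξ₀, b = -ξ₁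
    have hsum : ξ₀ + -ξ₁ = -ξ₂ := by rw [hξ]; abel
    have key := lemB ξ₀ (-ξ₁) n0 (neg_ne_zero.2 n1) (hsum ▸ neg_ne_zero.2 n2)
    rw [hsum, norm_neg, norm_neg] at key
    have habs : |‖ξ₀‖ - (-1) * ‖ξ₁‖ + -1 * ‖ξ₂‖| = ‖ξ₀‖ + ‖ξ₁‖ - ‖ξ₂‖ := by
      rw [abs_of_nonneg] <;>
        · have := norm_add_le ξ₀ (-ξ₁); rw [hsum, norm_neg, norm_neg] at this; linarith
    rw [habs, neg_one_smul, neg_one_smul]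
    linarith

/-- For all signs and any bilinear interaction `X₀ = X₁ − X₂` with all `ξ_j ≠ 0`,
`max(|h₀|,|h₁|,|h₂|) ≳ |ξ₀|·min(θ₀₁,θ₀₂)²`, where `h_j = τ_j ±_j |ξ_j|` and
`θ₀ₖ = θ(±₀ξ₀, ±ₖξₖ)`. -/
theorem bilinear_interaction_output_angle_bound :
    ∃ C : ℝ, 0 < C ∧
      ∀ (s₀ s₁ s₂ : ℝ), (s₀ = 1 ∨ s₀ = -1) → (s₁ = 1 ∨ s₁ = -1) → (s₂ = 1 ∨ s₂ = -1) →
      ∀ (τ₀ τ₁ τ₂ : ℝ) (ξ₀ ξ₁ ξ₂ : EuclideanSpace ℝ (Fin 3)),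
        ξ₀ ≠ 0 → ξ₁ ≠ 0 → ξ₂ ≠ 0 → τ₀ = τ₁ - τ₂ → ξ₀ = ξ₁ - ξ₂ →
        ‖ξ₀‖ * min (angle (s₀ • ξ₀) (s₁ • ξ₁)) (angle (s₀ • ξ₀) (s₂ • ξ₂)) ^ 2 ≤
          C * max (|τ₀ + s₀ * ‖ξ₀‖|) (max (|τ₁ + s₁ * ‖ξ₁‖|) (|τ₂ + s₂ * ‖ξ₂‖|)) := by
  refine ⟨45, by norm_num, ?_⟩
  intro s₀ s₁ s₂ hs₀ hs₁ hs₂ τ₀ τ₁ τ₂ ξ₀ ξ₁ ξ₂ n0 n1 n2 hτ hξ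
  have hs₀sq : s₀ * s₀ = 1 := by rcases hs₀ with rfl | rfl <;> norm_num
  -- reduce the angles
  have hang : ∀ (t : ℝ) (y : EuclideanSpace ℝ (Fin 3)),
      angle (s₀ • ξ₀) (t • y) = angle ξ₀ ((s₀ * t) • y) := by
    intro t y
    rcases hs₀ with rfl | rfl
    · rw [one_smul, one_mul]
    · rw [neg_one_smul, angle_neg_left_eq, ← neg_smul]; norm_num
  rw [hang s₁ ξ₁, hang s₂ ξ₂]
  have key := sigma_bound (s₀ * s₁) (s₀ * s₂)
    (by rcases hs₀ with rfl | rfl <;> rcases hs₁ with rfl | rfl <;> norm_num)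
    (by rcases hs₀ with rfl | rfl <;> rcases hs₂ with rfl | rfl <;> norm_num)
    ξ₀ ξ₁ ξ₂ n0 n1 n2 hξ
  refine le_trans key ?_
  -- the modulation bound
  set h₀ := τ₀ + s₀ * ‖ξ₀‖
  set h₁ := τ₁ + s₁ * ‖ξ₁‖
  set h₂ := τ₂ + s₂ * ‖ξ₂‖
  have hτ0 : τ₀ - τ₁ + τ₂ = 0 := by rw [hτ]; ring
  have hid : ‖ξ₀‖ - s₀ * s₁ * ‖ξ₁‖ + s₀ * s₂ * ‖ξ₂‖ = s₀ * (h₀ - h₁ + h₂) := by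
    simp only [h₀, h₁, h₂]
    linear_combination (-‖ξ₀‖) * hs₀sq + (-s₀) * hτ0
  have habs0 : |s₀| = 1 := by rcases hs₀ with rfl | rfl <;> norm_num
  have hA : |‖ξ₀‖ - s₀ * s₁ * ‖ξ₁‖ + s₀ * s₂ * ‖ξ₂‖| = |h₀ - h₁ + h₂| := by
    rw [hid, abs_mul, habs0, one_mul]
  rw [hA]
  have h0m : |h₀| ≤ max |h₀| (max |h₁| |h₂|) := le_max_left _ _
  have h1m : |h₁| ≤ max |h₀| (max |h₁| |h₂|) :=
    le_trans (le_max_left _ _) (le_max_right _ _)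
  have h2m : |h₂| ≤ max |h₀| (max |h₁| |h₂|) :=
    le_trans (le_max_right _ _) (le_max_right _ _)
  have htriabs : |h₀ - h₁ + h₂| ≤ |h₀| + |h₁| + |h₂| := by
    calc |h₀ - h₁ + h₂| ≤ |h₀ - h₁| + |h₂| := abs_add_le _ _
      _ ≤ |h₀| + |h₁| + |h₂| := by have := abs_sub h₀ h₁; linarith
  linarith
end

section
/- Let N, L ≥ 1, 0 < γ < 1 and ω ∈ S^2, and let (τ,ξ) satisfy ⟨ξ⟩ ∼ N, θ(±ξ, ω) ≤ γ and ⟨τ ± |ξ|⟩ ∼ L. Then |τ + ξ·ω| ≲ max(L, Nγ²), with an absolute implicit constant; that is, the thickened angular sector of the null cone K^±_{N,L,γ,ω} is contained in the null-hyperplane slab H_{max(L,Nγ²)}(ω) = {(τ,ξ) : |τ + ξ·ω| ≲ max(L,Nγ²)}. -/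
open InnerProductGeometry
open scoped RealInnerProductSpace

/-! Split `τ + ξ·ω = (τ ± |ξ|) ∓ (|ξ| - (±ξ)·ω)`. The first term is `≲ L`; the second equals
`|ξ| (1 - cos θ) ≤ |ξ| θ² / 2 ≲ N γ²`, since `1 - cos θ ≤ θ² / 2`. -/

section InnerProductSpace

variable {V : Type*} [NormedAddCommGroup V] [InnerProductSpace ℝ V]

theorem norm_mul_norm_sub_inner_le_angle_sq (x y : V) :
    ‖x‖ * ‖y‖ - ⟪x, y⟫ ≤ ‖x‖ * ‖y‖ * (angle x y ^ 2 / 2) := by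
  have hcos : 1 - angle x y ^ 2 / 2 ≤ Real.cos (angle x y) :=
    Real.one_sub_sq_div_two_le_cos
  rw [← cos_angle_mul_norm_mul_norm]
  nlinarith [mul_nonneg (norm_nonneg x) (norm_nonneg y)]

theorem abs_add_inner_le_abs_add_sign_mul_norm {s : ℝ} (hs : |s| = 1) (τ : ℝ) (ξ ω : V)
    (hω : ‖ω‖ = 1) :
    |τ + ⟪ξ, ω⟫| ≤ |τ + s * ‖ξ‖| + (‖ξ‖ - ⟪s • ξ, ω⟫) := by
  have hss : s * s = 1 := by rw [← abs_mul_self, abs_mul, hs, one_mul]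
  have hsplit : τ + ⟪ξ, ω⟫ = (τ + s * ‖ξ‖) - s * (‖ξ‖ - ⟪s • ξ, ω⟫) := by
    rw [real_inner_smul_left]
    linear_combination -⟪ξ, ω⟫ * hss
  have hgap : 0 ≤ ‖ξ‖ - ⟪s • ξ, ω⟫ := by
    have := real_inner_le_norm (s • ξ) ω
    rw [norm_smul, Real.norm_eq_abs, hs, hω] at this
    linarith
  calc |τ + ⟪ξ, ω⟫|
      ≤ |τ + s * ‖ξ‖| + |s * (‖ξ‖ - ⟪s • ξ, ω⟫)| := by rw [hsplit]; exact abs_sub _ _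
    _ = |τ + s * ‖ξ‖| + (‖ξ‖ - ⟪s • ξ, ω⟫) := by rw [abs_mul, hs, one_mul, abs_of_nonneg hgap]

theorem abs_add_inner_le_of_angle_le {s γ : ℝ} (hs : |s| = 1) (τ : ℝ) (ξ ω : V)
    (hω : ‖ω‖ = 1) (hangle : angle (s • ξ) ω ≤ γ) :
    |τ + ⟪ξ, ω⟫| ≤ |τ + s * ‖ξ‖| + ‖ξ‖ * (γ ^ 2 / 2) := by
  have hgap := norm_mul_norm_sub_inner_le_angle_sq (s • ξ) ω
  rw [norm_smul, Real.norm_eq_abs, hs, one_mul, hω, mul_one] at hgap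
  have hsq : angle (s • ξ) ω ^ 2 ≤ γ ^ 2 := pow_le_pow_left₀ (angle_nonneg _ _) hangle 2
  have := abs_add_inner_le_abs_add_sign_mul_norm hs τ ξ ω hω
  nlinarith [norm_nonneg ξ]

end InnerProductSpace

theorem EuclideanSpace.sum_mul_eq_inner {ι : Type*} [Fintype ι] (x y : EuclideanSpace ℝ ι) :
    ∑ i, x i * y i = ⟪x, y⟫ := by
  simp [PiLp.inner_apply, mul_comm]

/-- If `N, L ≥ 1`, `0 < γ < 1`, `ω ∈ S²`, and `(τ,ξ)` satisfies `⟨ξ⟩ ∼ N`,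
`θ(±ξ,ω) ≤ γ` and `⟨τ ± |ξ|⟩ ∼ L`, then `|τ + ξ·ω| ≲ max(L, Nγ²)`; that is,
the thickened angular sector `K^±_{N,L,γ,ω}` of the null cone is contained in the
null-hyperplane slab `H_{max(L,Nγ²)}(ω)`. -/
theorem sector_subset_null_slab :
    ∃ C : ℝ, 0 < C ∧
      ∀ (sgn : ℝ), (sgn = 1 ∨ sgn = -1) →
      ∀ (N L γ : ℝ) (ω : EuclideanSpace ℝ (Fin 3)) (τ : ℝ)
        (ξ : EuclideanSpace ℝ (Fin 3)),
        1 ≤ N → 1 ≤ L → 0 < γ → γ < 1 → ‖ω‖ = 1 → ξ ≠ 0 →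
        N ≤ 2 * Real.sqrt (1 + ‖ξ‖ ^ 2) → Real.sqrt (1 + ‖ξ‖ ^ 2) ≤ 2 * N →
        angle (sgn • ξ) ω ≤ γ →
        L ≤ 2 * Real.sqrt (1 + (τ + sgn * ‖ξ‖) ^ 2) →
        Real.sqrt (1 + (τ + sgn * ‖ξ‖) ^ 2) ≤ 2 * L →
        |τ + ∑ i : Fin 3, ξ i * ω i| ≤ C * max L (N * γ ^ 2) := by
  refine ⟨3, by norm_num, ?_⟩
  intro sgn hsgn N L γ ω τ ξ _ _ _ _ hω _ _ hξN hangle _ hτL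
  have hs : |sgn| = 1 := by rcases hsgn with rfl | rfl <;> simp
  have hξ : ‖ξ‖ ≤ 2 * N :=
    (Real.abs_le_sqrt (by linarith)).trans' (le_abs_self _) |>.trans hξN
  have hτ : |τ + sgn * ‖ξ‖| ≤ 2 * L := (Real.abs_le_sqrt (by linarith)).trans hτL
  have hslab := abs_add_inner_le_of_angle_le hs τ ξ ω hω hangle
  rw [EuclideanSpace.sum_mul_eq_inner]
  calc |τ + ⟪ξ, ω⟫| ≤ 2 * L + 2 * N * (γ ^ 2 / 2) := by
        nlinarith [mul_le_mul_of_nonneg_right hξ (by positivity : 0 ≤ γ ^ 2 / 2)]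
    _ ≤ 3 * max L (N * γ ^ 2) := by
        linarith [le_max_left L (N * γ ^ 2), le_max_right L (N * γ ^ 2)]
end
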